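/- arXiv:2201.01026 — 5 statements merged into one kernel-verified Lean document; each statement's English description precedes it below -/
import Mathlib

section
/- The expected newsvendor profit h(P,R) = (P-c)(R-bP) - (P-s)·E[(R-A)⁺] is supermodular in (P,R); equivalently, for any P₁ ≤ P₂ and R₁ ≤ R₂, h(P₂,R₂) - h(P₂,R₁) ≥ h(P₁,R₂) - h(P₁,R₁). -/
/-!
The increment `h(P, R₂) - h(P, R₁)` is affine in `P` with slope
`(R₂ - R₁) - (E[(R₂ - A)⁺] - E[(R₁ - A)⁺])`, which is nonnegative because the expected
shortfall `R ↦ E[(R - A)⁺]` is 1-Lipschitz, as `R ↦ (R - a)⁺` is for every `a`.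
-/

open MeasureTheory

theorem lipschitzWith_integral_max_sub_zero {Ω : Type*} [MeasurableSpace Ω] {μ : Measure Ω}
    [IsProbabilityMeasure μ] {A : Ω → ℝ} (hA : Integrable A μ) :
    LipschitzWith 1 fun R => ∫ ω, max (R - A ω) 0 ∂μ := by
  have hint : ∀ R, Integrable (fun ω => max (R - A ω) 0) μ := fun R =>
    ((integrable_const R).sub hA).pos_part
  refine LipschitzWith.of_le_add fun x y => ?_
  have hpointwise : ∀ ω, max (x - A ω) 0 ≤ max (y - A ω) 0 + dist x y := fun ω => by
    have := abs_max_sub_max_le_abs (x - A ω) (y - A ω) 0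
    rw [sub_sub_sub_cancel_right, ← Real.dist_eq x y] at this
    linarith [le_abs_self (max (x - A ω) 0 - max (y - A ω) 0)]
  calc ∫ ω, max (x - A ω) 0 ∂μ ≤ ∫ ω, (max (y - A ω) 0 + dist x y) ∂μ :=
        integral_mono (hint x) ((hint y).add (integrable_const _)) hpointwise
    _ = ∫ ω, max (y - A ω) 0 ∂μ + dist x y := by
        rw [integral_add (hint y) (integrable_const _), integral_const, probReal_univ, one_smul]

theorem stmt0_general
    {Ω : Type*} [MeasurableSpace Ω] (μ : Measure Ω) [IsProbabilityMeasure μ]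
    (A : Ω → ℝ) (hA : Integrable A μ)
    (b c s : ℝ)
    (h : ℝ → ℝ → ℝ)
    (hdef : ∀ P R, h P R = (P - c) * (R - b * P) - (P - s) * ∫ ω, max (R - A ω) 0 ∂μ)
    (P₁ P₂ R₁ R₂ : ℝ) (hP : P₁ ≤ P₂) (hR : R₁ ≤ R₂) :
    h P₁ R₂ - h P₁ R₁ ≤ h P₂ R₂ - h P₂ R₁ := by
  have hshortfall := (lipschitzWith_integral_max_sub_zero hA).le_add_mul R₂ R₁
  rw [NNReal.coe_one, one_mul, Real.dist_eq, abs_of_nonneg (sub_nonneg.2 hR)] at hshortfall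
  simp only [hdef]
  linear_combination mul_nonneg (sub_nonneg.2 hP) (sub_nonneg.2 hshortfall)

/-- The expected newsvendor profit `h(P,R) = (P-c)(R-bP) - (P-s)·E[(R-A)⁺]` is
supermodular in `(P,R)`. -/
theorem stmt0
    {Ω : Type*} [MeasurableSpace Ω] (μ : Measure Ω) [IsProbabilityMeasure μ]
    (A : Ω → ℝ) (hA : Integrable A μ)
    (b c s : ℝ) (hb : 0 < b) (hcs : s < c)
    (h : ℝ → ℝ → ℝ)
    (hdef : ∀ P R, h P R = (P - c) * (R - b * P) - (P - s) * ∫ ω, max (R - A ω) 0 ∂μ)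
    (P₁ P₂ R₁ R₂ : ℝ) (hP₁ : c ≤ P₁) (hP : P₁ ≤ P₂) (hR : R₁ ≤ R₂) :
    h P₁ R₂ - h P₁ R₁ ≤ h P₂ R₂ - h P₂ R₁ :=
  stmt0_general μ A hA b c s h hdef P₁ P₂ R₁ R₂ hP hR
end

section
/- The variance of the newsvendor payoff satisfies Var[H(P,R)] = (P-s)²·Var[(R-A)⁺], and this quantity is nondecreasing in P (for P ≥ s) and nondecreasing in R. -/
/-!
`H(P,R)` is an affine function of `(R - A)⁺` with slope `-(P - s)`, so its variance is
`(P - s)² Var[(R - A)⁺]`, increasing in `P ≥ s`. For `R₁ ≤ R₂`, `(R₁ - A)⁺` is the image of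
`(R₂ - A)⁺` under the 1-Lipschitz map `y ↦ (y - (R₂ - R₁))⁺`, and a `K`-Lipschitz map scales a
variance by at most `K²`, since `2 Var[X] = E[(X - X')²]` for an independent copy `X'` of `X`.
-/

open MeasureTheory ProbabilityTheory
open scoped NNReal

lemma max_max_zero_sub_zero {δ : ℝ} (hδ : 0 ≤ δ) (x : ℝ) :
    max (max x 0 - δ) 0 = max (x - δ) 0 := by
  rw [← max_sub_sub_right, max_assoc, zero_sub, max_eq_right (by linarith : -δ ≤ 0)]

namespace ProbabilityTheory

variable {Ω : Type*} [MeasurableSpace Ω] {μ : Measure Ω} [IsProbabilityMeasure μ] {X : Ω → ℝ}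

lemma integral_sq_sub_prod_eq_two_mul_variance (hX : MemLp X 2 μ) :
    ∫ p, (X p.1 - X p.2) ^ 2 ∂(μ.prod μ) = 2 * Var[X; μ] := by
  have hXi : Integrable X μ := hX.integrable one_le_two
  have hmean : ∫ p, X p.1 - X p.2 ∂(μ.prod μ) = 0 := by
    rw [integral_sub (hXi.comp_fst μ) (hXi.comp_snd μ), integral_fun_fst, integral_fun_snd]
    simp
  have hsum := variance_add_prod hX hX.neg
  simp only [Pi.neg_apply, ← sub_eq_add_neg, variance_neg] at hsum
  rw [← variance_of_integral_eq_zero (X := fun p : Ω × Ω => X p.1 - X p.2)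
    ((hX.comp_fst μ).sub (hX.comp_snd μ)).aemeasurable hmean, hsum, two_mul]

lemma variance_comp_le_of_lipschitzWith {φ : ℝ → ℝ} {K : ℝ≥0} (hφ : LipschitzWith K φ)
    (hX : MemLp X 2 μ) : Var[fun ω => φ (X ω); μ] ≤ K ^ 2 * Var[X; μ] := by
  have hφX : MemLp (fun ω => φ (X ω)) 2 μ := by
    have h0 : LipschitzWith K fun x => φ x - φ 0 :=
      .of_dist_le_mul fun x y => by simpa only [dist_sub_right] using hφ.dist_le_mul x y
    convert (h0.comp_memLp (sub_self _) hX).add (memLp_const (φ 0)) using 1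
    ext; simp
  have hsq : ∀ a b, (φ a - φ b) ^ 2 ≤ K ^ 2 * (a - b) ^ 2 := fun a b => by
    rw [← sq_abs, ← sq_abs (a - b), ← mul_pow]
    exact pow_le_pow_left₀ (abs_nonneg _) (hφ.dist_le_mul a b) 2
  have hint : ∫ p, (φ (X p.1) - φ (X p.2)) ^ 2 ∂(μ.prod μ)
      ≤ ∫ p, (K : ℝ) ^ 2 * (X p.1 - X p.2) ^ 2 ∂(μ.prod μ) :=
    integral_mono ((hφX.comp_fst μ).sub (hφX.comp_snd μ)).integrable_sq
      (((hX.comp_fst μ).sub (hX.comp_snd μ)).integrable_sq.const_mul _) fun p => hsq _ _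
  rw [integral_sq_sub_prod_eq_two_mul_variance hφX, integral_const_mul,
    integral_sq_sub_prod_eq_two_mul_variance hX] at hint
  linarith

lemma variance_const_sub_mul (k t : ℝ) {Y : Ω → ℝ} (hY : AEStronglyMeasurable Y μ) :
    Var[fun ω => k - t * Y ω; μ] = t ^ 2 * Var[Y; μ] := by
  rw [variance_const_sub (hY.const_mul t), variance_const_mul]

lemma monotone_variance_max_sub_zero {A : Ω → ℝ} (hA : MemLp A 2 μ) :
    Monotone fun R : ℝ => Var[fun ω => max (R - A ω) 0; μ] := by
  intro R₁ R₂ hR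
  have hφ : LipschitzWith 1 fun y : ℝ => max (y - (R₂ - R₁)) 0 :=
    (IsometryEquiv.subRight (R₂ - R₁)).isometry.lipschitz.max_const 0
  have hY : MemLp (fun ω => max (R₂ - A ω) 0) 2 μ :=
    (LipschitzWith.id.max_const 0).comp_memLp (max_self 0) ((memLp_const R₂).sub hA)
  calc Var[fun ω => max (R₁ - A ω) 0; μ]
      = Var[fun ω => max (max (R₂ - A ω) 0 - (R₂ - R₁)) 0; μ] := by
        simp_rw [max_max_zero_sub_zero (sub_nonneg.2 hR), sub_sub_sub_cancel_left]
    _ ≤ Var[fun ω => max (R₂ - A ω) 0; μ] := by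
        simpa using variance_comp_le_of_lipschitzWith hφ hY

end ProbabilityTheory

theorem stmt2_general
    {Ω : Type*} [MeasurableSpace Ω] (μ : Measure Ω) [IsProbabilityMeasure μ]
    (A : Ω → ℝ) (hA : MemLp A 2 μ)
    (b c s : ℝ)
    (H : ℝ → ℝ → Ω → ℝ)
    (hdef : ∀ P R ω, H P R ω = (P - c) * (R - b * P) - (P - s) * max (R - A ω) 0) :
    (∀ P R : ℝ, variance (H P R) μ = (P - s) ^ 2 * variance (fun ω => max (R - A ω) 0) μ) ∧
    (∀ P₁ P₂ R : ℝ, s ≤ P₁ → P₁ ≤ P₂ → variance (H P₁ R) μ ≤ variance (H P₂ R) μ) ∧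
    (∀ P R₁ R₂ : ℝ, s ≤ P → R₁ ≤ R₂ → variance (H P R₁) μ ≤ variance (H P R₂) μ) := by
  have hvar : ∀ P R : ℝ,
      variance (H P R) μ = (P - s) ^ 2 * variance (fun ω => max (R - A ω) 0) μ := fun P R => by
    rw [show H P R = _ from funext (hdef P R)]
    have hA' := hA.aestronglyMeasurable
    exact variance_const_sub_mul _ _ (by fun_prop)
  refine ⟨hvar, fun P₁ P₂ R hP₁ hP => ?_, fun P R₁ R₂ _ hR => ?_⟩
  · rw [hvar, hvar]
    exact mul_le_mul_of_nonneg_right (by gcongr) (variance_nonneg _ _)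
  · rw [hvar, hvar]
    gcongr
    exact monotone_variance_max_sub_zero hA hR

/-- `Var[H(P,R)] = (P-s)² Var[(R-A)⁺]`, nondecreasing in `P` (for `P ≥ s`) and in `R`. -/
theorem stmt2
    {Ω : Type*} [MeasurableSpace Ω] (μ : Measure Ω) [IsProbabilityMeasure μ]
    (A : Ω → ℝ) (hA : MemLp A 2 μ)
    (b c s : ℝ) (hb : 0 < b) (hcs : s < c)
    (H : ℝ → ℝ → Ω → ℝ)
    (hdef : ∀ P R ω, H P R ω = (P - c) * (R - b * P) - (P - s) * max (R - A ω) 0) :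
    (∀ P R : ℝ, variance (H P R) μ = (P - s) ^ 2 * variance (fun ω => max (R - A ω) 0) μ) ∧
    (∀ P₁ P₂ R : ℝ, s ≤ P₁ → P₁ ≤ P₂ → variance (H P₁ R) μ ≤ variance (H P₂ R) μ) ∧
    (∀ P R₁ R₂ : ℝ, s ≤ P → R₁ ≤ R₂ → variance (H P R₁) μ ≤ variance (H P R₂) μ) :=
  stmt2_general μ A hA b c s H hdef
end

section
/- Let μ = E[A] and σ = √(Var A). For every P with s ≤ P, the expected newsvendor profit satisfies E[(P-c)(μ - bP) - (P-s)(μ - A)⁺] ≥ -bP² + (bc + μ - σ/2)P - (cμ - sσ/2). -/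
/-!
The expected shortfall `E[(μ - A)⁺]` is half the mean absolute deviation `E|A - μ|`, since
`E[μ - A] = 0`, and the mean absolute deviation is at most `σ` because `(E|X|)² ≤ E[X²]` (i.e. `Var|X| ≥ 0`).
Multiplying `E[(μ - A)⁺] ≤ σ/2` by `P - s ≥ 0` gives the bound; the rest is algebra.
-/

open MeasureTheory ProbabilityTheory

lemma max_zero_eq_half_add_abs (x : ℝ) : max x 0 = (x + |x|) / 2 := by
  rcases le_total x 0 with hx | hx
  · rw [max_eq_right hx, abs_of_nonpos hx]; ring
  · rw [max_eq_left hx, abs_of_nonneg hx]; ring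

section

variable {Ω : Type*} [MeasurableSpace Ω] {μ : Measure Ω}

lemma integral_max_zero_eq_half_integral_abs {X : Ω → ℝ} (hX : Integrable X μ)
    (hX0 : ∫ ω, X ω ∂μ = 0) : ∫ ω, max (X ω) 0 ∂μ = (∫ ω, |X ω| ∂μ) / 2 := by
  simp_rw [max_zero_eq_half_add_abs]
  rw [integral_div, integral_add hX hX.abs, hX0, zero_add]

lemma integral_abs_le_sqrt_integral_sq [IsProbabilityMeasure μ] {X : Ω → ℝ}
    (hX : MemLp X 2 μ) : ∫ ω, |X ω| ∂μ ≤ Real.sqrt (∫ ω, X ω ^ 2 ∂μ) := by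
  have hsq : (∫ ω, |X ω| ∂μ) ^ 2 ≤ ∫ ω, X ω ^ 2 ∂μ := by
    have hvar : 0 ≤ variance |X| μ := variance_nonneg _ _
    rw [variance_eq_sub hX.abs] at hvar
    simpa using hvar
  exact Real.le_sqrt_of_sq_le hsq

lemma integral_max_integral_sub_zero_le_half_sqrt_variance [IsProbabilityMeasure μ]
    {A : Ω → ℝ} (hA : MemLp A 2 μ) :
    ∫ ω, max ((∫ x, A x ∂μ) - A ω) 0 ∂μ ≤ Real.sqrt (variance A μ) / 2 := by
  have hA1 : Integrable A μ := hA.integrable one_le_two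
  have hmean : ∫ ω, ((∫ x, A x ∂μ) - A ω) ∂μ = 0 := by
    rw [integral_sub (integrable_const _) hA1]; simp
  rw [integral_max_zero_eq_half_integral_abs (X := fun ω => (∫ x, A x ∂μ) - A ω)
      ((integrable_const _).sub hA1) hmean,
    variance_eq_integral hA.aemeasurable]
  simp_rw [abs_sub_comm (∫ x, A x ∂μ)]
  gcongr
  exact integral_abs_le_sqrt_integral_sq (hA.sub (memLp_const _))

end

theorem stmt7_general
    {Ω : Type*} [MeasurableSpace Ω] (μ : Measure Ω) [IsProbabilityMeasure μ]
    (A : Ω → ℝ) (hA : MemLp A 2 μ)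
    (b c s P : ℝ) (hP : s ≤ P) :
    -b * P ^ 2 + (b * c + (∫ ω, A ω ∂μ) - Real.sqrt (variance A μ) / 2) * P
        - (c * (∫ ω, A ω ∂μ) - s * Real.sqrt (variance A μ) / 2)
      ≤ (P - c) * ((∫ ω, A ω ∂μ) - b * P)
          - (P - s) * ∫ ω, max ((∫ x, A x ∂μ) - A ω) 0 ∂μ := by
  have hshortfall := mul_le_mul_of_nonneg_left
    (integral_max_integral_sub_zero_le_half_sqrt_variance hA) (sub_nonneg.mpr hP)
  linarith

/-- Lower bound on the expected newsvendor profit at `R = E[A]`: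
`(P-c)(μ-bP) - (P-s)E[(μ-A)⁺] ≥ -bP² + (bc + μ - σ/2)P - (cμ - sσ/2)`. -/
theorem stmt7
    {Ω : Type*} [MeasurableSpace Ω] (μ : Measure Ω) [IsProbabilityMeasure μ]
    (A : Ω → ℝ) (hA : MemLp A 2 μ)
    (b c s P : ℝ) (hb : 0 < b) (hcs : s < c) (hP : s ≤ P) :
    -b * P ^ 2 + (b * c + (∫ ω, A ω ∂μ) - Real.sqrt (variance A μ) / 2) * P
        - (c * (∫ ω, A ω ∂μ) - s * Real.sqrt (variance A μ) / 2)
      ≤ (P - c) * ((∫ ω, A ω ∂μ) - b * P)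
          - (P - s) * ∫ ω, max ((∫ x, A x ∂μ) - A ω) 0 ∂μ :=
  stmt7_general μ A hA b c s P hP
end

section
/- For κ > 0, σ > 0 and 0 ≤ τ < π/(4κ), the function f₂(τ) = (κ/σ²)·sin(κτ)/(cos(κτ) - sin(κτ)) satisfies the Riccati equation f₂'(τ) = 2κ f₂(τ) + 2σ² f₂(τ)² + (κ/σ)², with initial condition f₂(0) = 0, and f₂(τ) ≥ 0 on this interval. -/
/-!
With `g x = sin x / (cos x - sin x)`, the quotient rule gives
`g' = (cos² x + sin² x) / (cos x - sin x)² = 1 + 2 g + 2 g²`, and `f₂ τ = (κ / σ²) g (κ τ)`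
rescales this equation into the stated one. Since `cos x - sin x = √2 cos (x + π/4)`, the denominator stays
positive for `x < π/4`, which also makes `f₂ ≥ 0` on `[0, π/(4κ))`.
-/

open Real

namespace Real

theorem sin_lt_cos_of_mem_Ioo {x : ℝ} (hx : x ∈ Set.Ioo (-(3 * π / 4)) (π / 4)) :
    sin x < cos x := by
  have hcos : 0 < cos (x + π / 4) :=
    cos_pos_of_mem_Ioo ⟨by linarith [hx.1], by linarith [hx.2]⟩
  have hsqrt : 0 < √2 := by positivity
  rw [cos_add, cos_pi_div_four, sin_pi_div_four] at hcos
  nlinarith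

noncomputable def sinDivCosSubSin (x : ℝ) : ℝ := sin x / (cos x - sin x)

theorem sinDivCosSubSin_zero : sinDivCosSubSin 0 = 0 := by
  simp [sinDivCosSubSin]

theorem sinDivCosSubSin_nonneg {x : ℝ} (hx : x ∈ Set.Ico 0 (π / 4)) :
    0 ≤ sinDivCosSubSin x :=
  div_nonneg (sin_nonneg_of_nonneg_of_le_pi hx.1 (by linarith [hx.2, pi_pos]))
    (sub_nonneg.mpr (sin_lt_cos_of_mem_Ioo ⟨by linarith [hx.1, pi_pos], hx.2⟩).le)

theorem hasDerivAt_sinDivCosSubSin {x : ℝ} (hx : cos x ≠ sin x) :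
    HasDerivAt sinDivCosSubSin
      (1 + 2 * sinDivCosSubSin x + 2 * sinDivCosSubSin x ^ 2) x := by
  have hden : cos x - sin x ≠ 0 := sub_ne_zero.mpr hx
  refine ((hasDerivAt_sin x).div ((hasDerivAt_cos x).sub (hasDerivAt_sin x)) hden).congr_deriv ?_
  simp only [sinDivCosSubSin, Pi.sub_apply]
  field_simp
  ring

end Real

/-- For `κ, σ > 0` and `0 ≤ τ < π/(4κ)`, the function
`f₂(τ) = (κ/σ²)·sin(κτ)/(cos(κτ) - sin(κτ))` solves the Riccati equation
`f₂' = 2κ f₂ + 2σ² f₂² + (κ/σ)²`, with `f₂(0) = 0` and `f₂ ≥ 0` on this interval. -/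
theorem stmt12
    (κ σ : ℝ) (hκ : 0 < κ) (hσ : 0 < σ)
    (f₂ : ℝ → ℝ)
    (hf : ∀ τ, f₂ τ = (κ / σ ^ 2) * Real.sin (κ * τ) /
      (Real.cos (κ * τ) - Real.sin (κ * τ))) :
    f₂ 0 = 0 ∧
    ∀ τ ∈ Set.Ico (0 : ℝ) (Real.pi / (4 * κ)),
      0 ≤ f₂ τ ∧
      HasDerivAt f₂ (2 * κ * f₂ τ + 2 * σ ^ 2 * (f₂ τ) ^ 2 + (κ / σ) ^ 2) τ := by
  have hf₂ : f₂ = fun τ => κ / σ ^ 2 * sinDivCosSubSin (κ * τ) := by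
    funext τ
    rw [hf, mul_div_assoc, sinDivCosSubSin]
  subst hf₂
  refine ⟨by simp [sinDivCosSubSin_zero], fun τ hτ => ?_⟩
  have hκτ : κ * τ ∈ Set.Ico 0 (π / 4) := by
    refine ⟨mul_nonneg hκ.le hτ.1, ?_⟩
    calc κ * τ < κ * (π / (4 * κ)) := mul_lt_mul_of_pos_left hτ.2 hκ
      _ = π / 4 := by field_simp
  refine ⟨mul_nonneg (by positivity) (sinDivCosSubSin_nonneg hκτ), ?_⟩
  have hsc : cos (κ * τ) ≠ sin (κ * τ) :=
    (sin_lt_cos_of_mem_Ioo ⟨by linarith [hκτ.1, pi_pos], hκτ.2⟩).ne'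
  have hderiv := ((hasDerivAt_sinDivCosSubSin hsc).comp τ
    ((hasDerivAt_id τ).const_mul κ)).const_mul (κ / σ ^ 2)
  refine hderiv.congr_deriv ?_
  field_simp
  ring
end

section
/- For a real random variable A and real R with P(A ≥ R) > 0, one has E[min(R, A)] = R·P(A ≥ R) + E[A·1{A < R}]. Consequently, the function T(R) = E[A·1{A < R}]/P(A ≥ R) is nondecreasing on any interval where E[min(R,A)] ≥ 0. -/
/-!
Pointwise, `min R a = R·1{R ≤ a} + a·1{a < R}`; integrating gives the identity. For monotonicity
of `T = e/p` with `p R = P(A ≥ R)` and `e R = E[A·1{A < R}]`, split off the slab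
`S = {R₁ ≤ A < R₂}`: then `p R₁ = P(S) + p R₂` and `e R₂ = e R₁ + E[A·1_S] ≥ e R₁ + R₁·P(S)`.
Cross-multiplying, `e R₂ · p R₁ - e R₁ · p R₂ ≥ P(S)·(R₁·p R₁ + e R₁) = P(S)·E[min(R₁, A)] ≥ 0`.
-/

open MeasureTheory Set

lemma min_eq_ite_le_add_ite_lt (R a : ℝ) :
    min R a = (if R ≤ a then R else 0) + (if a < R then a else 0) := by
  rcases le_or_gt R a with h | h
  · simp [h, not_lt.mpr h]
  · simp [h, not_le.mpr h, h.le]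

section TruncatedMoments

variable {Ω : Type*} [MeasurableSpace Ω] {μ : Measure Ω} {A : Ω → ℝ}

lemma integral_ite_lt_eq_setIntegral (hAm : Measurable A) (R : ℝ) :
    ∫ ω, (if A ω < R then A ω else 0) ∂μ = ∫ ω in A ⁻¹' Iio R, A ω ∂μ := by
  rw [← integral_indicator (hAm measurableSet_Iio)]
  rfl

lemma integrable_ite_lt (hA : Integrable A μ) (hAm : Measurable A) (R : ℝ) :
    Integrable (fun ω => if A ω < R then A ω else 0) μ :=
  hA.indicator (s := A ⁻¹' Iio R) (hAm measurableSet_Iio)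

lemma integral_ite_le_const (hAm : Measurable A) (R : ℝ) :
    ∫ ω, (if R ≤ A ω then R else 0) ∂μ = R * μ.real {ω | R ≤ A ω} := by
  rw [mul_comm, ← smul_eq_mul]
  exact integral_indicator_const R (hAm measurableSet_Ici)

theorem integral_min_const_eq [IsFiniteMeasure μ] (hA : Integrable A μ) (hAm : Measurable A)
    (R : ℝ) :
    ∫ ω, min R (A ω) ∂μ
      = R * μ.real {ω | R ≤ A ω} + ∫ ω, (if A ω < R then A ω else 0) ∂μ := by
  have hconst : Integrable (fun ω => if R ≤ A ω then R else 0) μ :=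
    (integrable_const R).indicator (s := A ⁻¹' Ici R) (hAm measurableSet_Ici)
  simp_rw [min_eq_ite_le_add_ite_lt R]
  rw [integral_add hconst (integrable_ite_lt hA hAm R), integral_ite_le_const hAm]

lemma measureReal_le_eq_slab_add [IsFiniteMeasure μ] (hAm : Measurable A) {R₁ R₂ : ℝ}
    (hR : R₁ ≤ R₂) :
    μ.real {ω | R₁ ≤ A ω} = μ.real (A ⁻¹' Ico R₁ R₂) + μ.real {ω | R₂ ≤ A ω} := by
  have hdisj : Disjoint (Ico R₁ R₂) (Ici R₂) :=
    (Iio_disjoint_Ici le_rfl).mono_left Ico_subset_Iio_self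
  change μ.real (A ⁻¹' Ici R₁) = μ.real (A ⁻¹' Ico R₁ R₂) + μ.real (A ⁻¹' Ici R₂)
  rw [← measureReal_union (hdisj.preimage A) (hAm measurableSet_Ici), ← preimage_union,
    Ico_union_Ici_eq_Ici hR]

lemma integral_ite_lt_eq_add_slab (hA : Integrable A μ) (hAm : Measurable A) {R₁ R₂ : ℝ}
    (hR : R₁ ≤ R₂) :
    ∫ ω, (if A ω < R₂ then A ω else 0) ∂μ
      = ∫ ω, (if A ω < R₁ then A ω else 0) ∂μ + ∫ ω in A ⁻¹' Ico R₁ R₂, A ω ∂μ := by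
  have hdisj : Disjoint (Iio R₁) (Ico R₁ R₂) :=
    (Iio_disjoint_Ici le_rfl).mono_right Ico_subset_Ici_self
  rw [integral_ite_lt_eq_setIntegral hAm, integral_ite_lt_eq_setIntegral hAm,
    ← setIntegral_union (hdisj.preimage A) (hAm measurableSet_Ico) hA.integrableOn
      hA.integrableOn, ← preimage_union, Iio_union_Ico_eq_Iio hR]

lemma mul_measureReal_slab_le [IsFiniteMeasure μ] (hA : Integrable A μ) (hAm : Measurable A)
    (R₁ R₂ : ℝ) :
    R₁ * μ.real (A ⁻¹' Ico R₁ R₂) ≤ ∫ ω in A ⁻¹' Ico R₁ R₂, A ω ∂μ := by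
  rw [mul_comm, ← smul_eq_mul]
  exact setIntegral_ge_of_const_le (hAm measurableSet_Ico) (measure_ne_top μ _)
    (fun _ hω => hω.1) hA.integrableOn

theorem div_measureReal_le_mono [IsFiniteMeasure μ] (hA : Integrable A μ) (hAm : Measurable A)
    {R₁ R₂ : ℝ} (hR : R₁ ≤ R₂) (hp₂ : 0 < μ.real {ω | R₂ ≤ A ω})
    (hmin : 0 ≤ ∫ ω, min R₁ (A ω) ∂μ) :
    (∫ ω, (if A ω < R₁ then A ω else 0) ∂μ) / μ.real {ω | R₁ ≤ A ω}
      ≤ (∫ ω, (if A ω < R₂ then A ω else 0) ∂μ) / μ.real {ω | R₂ ≤ A ω} := by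
  have hp := measureReal_le_eq_slab_add (μ := μ) hAm hR
  have hslab := mul_measureReal_slab_le (μ := μ) hA hAm R₁ R₂
  have hq : 0 ≤ μ.real (A ⁻¹' Ico R₁ R₂) := measureReal_nonneg
  have hp₁ : 0 < μ.real {ω | R₁ ≤ A ω} := hp ▸ add_pos_of_nonneg_of_pos hq hp₂
  rw [integral_min_const_eq hA hAm] at hmin
  rw [div_le_div_iff₀ hp₁ hp₂, integral_ite_lt_eq_add_slab hA hAm hR]
  linear_combination mul_nonneg hq hmin + mul_le_mul_of_nonneg_right hslab hp₁.le
    - (∫ ω, (if A ω < R₁ then A ω else 0) ∂μ) * hp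

end TruncatedMoments

/-- `E[min(R,A)] = R·P(A ≥ R) + E[A·1{A < R}]`, and consequently
`T(R) = E[A·1{A<R}]/P(A ≥ R)` is nondecreasing on any interval where
`E[min(R,A)] ≥ 0` (and `P(A ≥ R) > 0`). -/
theorem stmt16
    {Ω : Type*} [MeasurableSpace Ω] (μ : Measure Ω) [IsProbabilityMeasure μ]
    (A : Ω → ℝ) (hA : Integrable A μ) (hAm : Measurable A) :
    (∀ R : ℝ, 0 < μ {ω | R ≤ A ω} →
      ∫ ω, min R (A ω) ∂μ
        = R * (μ {ω | R ≤ A ω}).toReal + ∫ ω, (if A ω < R then A ω else 0) ∂μ) ∧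
    (∀ R₁ R₂ : ℝ, R₁ ≤ R₂ → 0 < μ {ω | R₂ ≤ A ω} →
      (∀ R ∈ Set.Icc R₁ R₂, 0 ≤ ∫ ω, min R (A ω) ∂μ) →
      (∫ ω, (if A ω < R₁ then A ω else 0) ∂μ) / (μ {ω | R₁ ≤ A ω}).toReal
        ≤ (∫ ω, (if A ω < R₂ then A ω else 0) ∂μ) / (μ {ω | R₂ ≤ A ω}).toReal) :=
  ⟨fun R _ => integral_min_const_eq hA hAm R,
    fun _ _ hR hp₂ hmin => div_measureReal_le_mono hA hAm hR
      (ENNReal.toReal_pos hp₂.ne' (measure_ne_top μ _)) (hmin _ ⟨le_rfl, hR⟩)⟩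
end
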